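/- For all integers a, b ≥ 1 and q ≥ 0, the forest consisting of q+1 pairwise disjoint stars with a vertices each together with q pairwise disjoint stars with b vertices each admits a super edge-magic labeling. -/

import Mathlib

/-- An edge-magic labeling of an `n`-vertex graph `G` with `m` edges and magic constant `k`:
a bijection `f : V ∪ E → {1,…,n+m}` with `f(u)+f(v)+f(uv) = k` for every edge `uv`. -/
def IsEdgeMagicLabeling {V : Type*} [Fintype V] (G : SimpleGraph V)
    (f : V ⊕ ↥G.edgeSet → ℕ) (k : ℕ) : Prop :=
  Set.BijOn f Set.univ (Set.Icc 1 (Fintype.card V + G.edgeSet.ncard)) ∧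
  ∀ (u v : V) (h : G.Adj u v),
    f (Sum.inl u) + f (Sum.inl v) + f (Sum.inr ⟨s(u, v), (G.mem_edgeSet).mpr h⟩) = k

/-- A super edge-magic labeling: an edge-magic labeling whose vertex labels are
exactly `{1,…,n}`. -/
def IsSuperEdgeMagicLabeling {V : Type*} [Fintype V] (G : SimpleGraph V)
    (f : V ⊕ ↥G.edgeSet → ℕ) : Prop :=
  (∃ k, IsEdgeMagicLabeling G f k) ∧
  Set.range (fun v : V => f (Sum.inl v)) = Set.Icc 1 (Fintype.card V)

/-- A graph is super edge-magic if it admits a super edge-magic labeling. -/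
def SuperEdgeMagic {V : Type*} [Fintype V] (G : SimpleGraph V) : Prop :=
  ∃ f, IsSuperEdgeMagicLabeling G f

/-- The constellation consisting of `p` pairwise disjoint stars, the `i`-th having `m i`
edges: vertex `⟨i, 0⟩` is the center of the `i`-th star and `⟨i, 1⟩, …, ⟨i, m i⟩` are its
leaves. -/
def constellationGraph (p : ℕ) (m : Fin p → ℕ) :
    SimpleGraph (Σ i : Fin p, Fin (m i + 1)) where
  Adj a b := a.1 = b.1 ∧ ((a.2.val = 0 ∧ b.2.val ≠ 0) ∨ (a.2.val ≠ 0 ∧ b.2.val = 0))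
  symm := by constructor; rintro ⟨i, x⟩ ⟨j, y⟩ ⟨h1, h2⟩; exact ⟨h1.symm, by tauto⟩
  loopless := by constructor; rintro ⟨i, x⟩ ⟨-, h⟩; tauto

/-!
Number the stars `0, …, 2q`, the first `q + 1` with `A` leaves and the last `q` with `B` leaves.
The centers get the labels `1, …, 2q + 1`, the odd ones in the first block and the even ones in
the second. `edgeRank i j` lists the edges (star `i`, leaf `j`) in rounds of one leaf per star,
first all rounds of the `B`-stars and then those of the `A`-stars, so it takes every value in
`[0, (q + 1) A + q B)` exactly once. Giving leaf `j` of star `i` the label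
`2q + 2 + edgeRank (mirror i) j`, where `mirror` reverses each block, makes the edge sum exactly
`3q + 3 + edgeRank i j`: the vertex labels are `1, …, n` and the edge sums are consecutive.
As observed by Figueroa-Centeno, Ichishima and Muntaner-Batle, this suffices: if the `m` edge
sums are `s, …, s + m - 1`, the edge with sum `s + t` gets the label `n + m - t`.
-/

open Function Set

def edgeSum {V : Type*} (g : V → ℕ) : Sym2 V → ℕ :=
  Sym2.lift ⟨fun u v => g u + g v, fun _ _ => add_comm _ _⟩

@[simp]
lemma edgeSum_mk {V : Type*} (g : V → ℕ) (u v : V) : edgeSum g s(u, v) = g u + g v := rfl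

lemma Set.range_eq_of_injective_of_ncard_le {α β : Type*} {f : α → β} {t : Set β}
    (hf : Injective f) (hft : ∀ a, f a ∈ t) (ht : t.ncard ≤ Nat.card α) (htf : t.Finite) :
    range f = t :=
  eq_of_subset_of_ncard_le (range_subset_iff.2 hft) (by rwa [ncard_range_of_injective hf]) htf

lemma Nat.eq_and_eq_of_mul_add_eq_mul_add {d j r j' r' : ℕ} (hr : r < d) (hr' : r' < d)
    (h : d * j + r = d * j' + r') : j = j' ∧ r = r' := by
  have hd : 0 < d := by omega
  refine ⟨?_, ?_⟩
  · simpa [Nat.mul_add_div hd, Nat.div_eq_of_lt hr, Nat.div_eq_of_lt hr'] using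
      congrArg (· / d) h
  · simpa [Nat.mul_comm d, Nat.mul_add_mod_of_lt hr, Nat.mul_add_mod_of_lt hr'] using
      congrArg (· % d) h

theorem SimpleGraph.superEdgeMagic_of_edgeSum {V : Type*} [Fintype V] (G : SimpleGraph V)
    {g : V → ℕ} (hg : Injective g) (hg_mem : ∀ v, g v ∈ Icc 1 (Fintype.card V)) {s : ℕ}
    (hsum : InjOn (edgeSum g) G.edgeSet)
    (hsum_mem : ∀ e ∈ G.edgeSet, edgeSum g e ∈ Ico s (s + G.edgeSet.ncard)) :
    SuperEdgeMagic G := by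
  set n := Fintype.card V
  set m := G.edgeSet.ncard
  set f : V ⊕ G.edgeSet → ℕ := Sum.elim g fun e => n + m + s - edgeSum g e
  have hf_mem : ∀ x, f x ∈ Icc 1 (n + m) := by
    rintro (v | ⟨e, he⟩)
    · have := hg_mem v; simp only [f, Sum.elim_inl, mem_Icc] at this ⊢; omega
    · have := hsum_mem e he; simp only [f, Sum.elim_inr, mem_Icc, mem_Ico] at this ⊢; omega
  have hf : Injective f := by
    refine hg.sumElim (fun e e' h => ?_) (fun v e h => ?_)
    · have := hsum_mem e e.2; have := hsum_mem e' e'.2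
      simp only [mem_Ico] at *
      exact Subtype.ext (hsum e.2 e'.2 (by omega))
    · have := hg_mem v; have := hsum_mem e e.2
      simp only [mem_Icc, mem_Ico] at *
      omega
  refine ⟨f, ⟨n + m + s, ⟨fun x _ => hf_mem x, hf.injOn, ?_⟩, fun u v h => ?_⟩, ?_⟩
  · rw [SurjOn, image_univ, range_eq_of_injective_of_ncard_le hf hf_mem _ (finite_Icc _ _)]
    simp [Nat.card_sum, Nat.card_coe_set_eq, n, m]
  · have := hsum_mem _ (G.mem_edgeSet.2 h)
    simp only [f, Sum.elim_inl, Sum.elim_inr, edgeSum_mk, mem_Ico] at this ⊢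
    omega
  · exact range_eq_of_injective_of_ncard_le hg hg_mem (by simp) (finite_Icc _ _)

section Constellation

variable {p : ℕ} {m : Fin p → ℕ}

lemma Sigma.ext_fin {x y : Σ i : Fin p, Fin (m i)} (h₁ : x.1.val = y.1.val)
    (h₂ : x.2.val = y.2.val) : x = y := by
  obtain ⟨i, j⟩ := x
  obtain ⟨i', j'⟩ := y
  obtain rfl : i = i' := Fin.ext h₁
  obtain rfl : j = j' := Fin.ext h₂
  rfl

def constellationEdge (p : ℕ) (m : Fin p → ℕ) (x : Σ i : Fin p, Fin (m i)) :
    Sym2 (Σ i : Fin p, Fin (m i + 1)) :=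
  s(⟨x.1, 0⟩, ⟨x.1, x.2.succ⟩)

lemma constellationEdge_injective : Injective (constellationEdge p m) := by
  rintro ⟨i, j⟩ ⟨i', j'⟩ h
  simp only [constellationEdge, Sym2.eq_iff, Sigma.mk.inj_iff] at h
  rcases h with ⟨-, rfl, h⟩ | ⟨⟨rfl, h⟩, -⟩
  · rw [Fin.succ_inj.1 (eq_of_heq h)]
  · exact absurd (eq_of_heq h).symm (Fin.succ_ne_zero j')

lemma edgeSet_constellationGraph :
    (constellationGraph p m).edgeSet = range (constellationEdge p m) := by
  refine Set.ext fun e => ⟨fun he => ?_, ?_⟩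
  · induction e using Sym2.ind with
    | _ u v =>
      obtain ⟨i, x⟩ := u
      obtain ⟨i', y⟩ := v
      obtain ⟨rfl, ⟨hx, hy⟩ | ⟨hx, hy⟩⟩ := (SimpleGraph.mem_edgeSet _).1 he
      · obtain rfl : x = 0 := Fin.ext hx
        exact ⟨⟨i, y.pred (Fin.ext_iff.not.2 hy)⟩, by simp [constellationEdge]⟩
      · obtain rfl : y = 0 := Fin.ext hy
        exact ⟨⟨i, x.pred (Fin.ext_iff.not.2 hx)⟩,
          by simp [constellationEdge, Sym2.eq_swap]⟩
  · rintro ⟨⟨i, j⟩, rfl⟩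
    exact ⟨rfl, Or.inl ⟨rfl, Fin.val_ne_of_ne (Fin.succ_ne_zero j)⟩⟩

lemma ncard_edgeSet_constellationGraph :
    (constellationGraph p m).edgeSet.ncard = ∑ i, m i := by
  rw [edgeSet_constellationGraph, ncard_range_of_injective constellationEdge_injective,
    Nat.card_eq_fintype_card, Fintype.card_sigma]
  simp

end Constellation

namespace TwoSizeConstellation

variable (q A B : ℕ)

def leafCount (i : ℕ) : ℕ := if i ≤ q then A else B

def centerLabel (i : ℕ) : ℕ := if i ≤ q then 2 * i + 1 else 2 * (i - q)

def mirror (i : ℕ) : ℕ := if i ≤ q then q - i else 3 * q + 1 - i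

def edgeRank (i j : ℕ) : ℕ := if i ≤ q then q * B + (q + 1) * j + i else q * j + (i - (q + 1))

variable {q A B}

lemma edgeRank_lt {i j : ℕ} (hi : i < 2 * q + 1) (hj : j < leafCount q A B i) :
    edgeRank q B i j < (q + 1) * A + q * B := by
  unfold leafCount at hj
  unfold edgeRank
  split_ifs at hj ⊢
  · have := Nat.mul_le_mul_left (q + 1) hj
    rw [Nat.mul_succ] at this
    omega
  · have := Nat.mul_le_mul_left q hj
    rw [Nat.mul_succ] at this
    omega

lemma edgeRank_inj {i j i' j' : ℕ} (hi : i < 2 * q + 1) (hi' : i' < 2 * q + 1)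
    (hj : j < leafCount q A B i) (hj' : j' < leafCount q A B i')
    (h : edgeRank q B i j = edgeRank q B i' j') : i = i' ∧ j = j' := by
  unfold leafCount at hj hj'
  unfold edgeRank at h
  split_ifs at hj hj' h
  · have := Nat.eq_and_eq_of_mul_add_eq_mul_add (d := q + 1) (by omega) (by omega)
      (by omega : (q + 1) * j + i = (q + 1) * j' + i')
    omega
  · have := Nat.mul_le_mul_left q hj'
    rw [Nat.mul_succ] at this
    omega
  · have := Nat.mul_le_mul_left q hj
    rw [Nat.mul_succ] at this
    omega
  · have := Nat.eq_and_eq_of_mul_add_eq_mul_add (d := q) (by omega) (by omega) h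
    omega

lemma mirror_lt {i : ℕ} (hi : i < 2 * q + 1) : mirror q i < 2 * q + 1 := by
  unfold mirror; split_ifs <;> omega

lemma leafCount_mirror {i : ℕ} (hi : i < 2 * q + 1) :
    leafCount q A B (mirror q i) = leafCount q A B i := by
  unfold leafCount mirror; split_ifs <;> first | rfl | omega

lemma mirror_inj {i i' : ℕ} (hi : i < 2 * q + 1) (hi' : i' < 2 * q + 1)
    (h : mirror q i = mirror q i') : i = i' := by
  unfold mirror at h; split_ifs at h <;> omega

lemma centerLabel_add_edgeRank_mirror {i : ℕ} (hi : i < 2 * q + 1) (j : ℕ) :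
    centerLabel q i + (2 * q + 2 + edgeRank q B (mirror q i) j) =
      3 * q + 3 + edgeRank q B i j := by
  unfold centerLabel edgeRank mirror; split_ifs <;> omega

lemma sum_leafCount : ∑ i : Fin (2 * q + 1), leafCount q A B i = (q + 1) * A + q * B := by
  have h₁ : ∀ i ∈ Finset.range (q + 1), leafCount q A B i = A := fun i hi =>
    if_pos (Nat.lt_succ_iff.1 (Finset.mem_range.1 hi))
  have h₂ : ∀ i ∈ Finset.range q, leafCount q A B (q + 1 + i) = B := fun i _ =>
    if_neg (by omega)
  rw [Fin.sum_univ_eq_sum_range (leafCount q A B), show 2 * q + 1 = (q + 1) + q by ring,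
    Finset.sum_range_add, Finset.sum_congr rfl h₁, Finset.sum_congr rfl h₂]
  simp [Nat.mul_comm]

variable (q A B) in
def vertexLabel : (Σ i : Fin (2 * q + 1), Fin (leafCount q A B i + 1)) → ℕ
  | ⟨i, x⟩ => Fin.cases (motive := fun _ => ℕ) (centerLabel q i)
      (fun j => 2 * q + 2 + edgeRank q B (mirror q i) j) x

@[simp]
lemma vertexLabel_zero (i : Fin (2 * q + 1)) : vertexLabel q A B ⟨i, 0⟩ = centerLabel q i := rfl

@[simp]
lemma vertexLabel_succ (i : Fin (2 * q + 1)) (j : Fin (leafCount q A B i)) :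
    vertexLabel q A B ⟨i, j.succ⟩ = 2 * q + 2 + edgeRank q B (mirror q i) j := rfl

lemma card_vertex :
    Fintype.card (Σ i : Fin (2 * q + 1), Fin (leafCount q A B i + 1)) =
      2 * q + 1 + ((q + 1) * A + q * B) := by
  simp [Fintype.card_sigma, Finset.sum_add_distrib, sum_leafCount, Nat.add_comm]

lemma vertexLabel_mem (v : Σ i : Fin (2 * q + 1), Fin (leafCount q A B i + 1)) :
    vertexLabel q A B v ∈ Icc 1 (2 * q + 1 + ((q + 1) * A + q * B)) := by
  obtain ⟨i, x⟩ := v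
  rcases Fin.eq_zero_or_eq_succ x with rfl | ⟨j, rfl⟩
  · have := i.isLt
    simp only [vertexLabel_zero, centerLabel, mem_Icc]
    split_ifs <;> omega
  · have := edgeRank_lt (mirror_lt i.isLt) (j.isLt.trans_eq (leafCount_mirror i.isLt).symm)
    simp only [vertexLabel_succ, mem_Icc]
    omega

lemma vertexLabel_injective : Injective (vertexLabel q A B) := by
  rintro ⟨i, x⟩ ⟨i', y⟩ h
  have hi := i.isLt
  have hi' := i'.isLt
  rcases Fin.eq_zero_or_eq_succ x with rfl | ⟨j, rfl⟩ <;>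
    rcases Fin.eq_zero_or_eq_succ y with rfl | ⟨j', rfl⟩ <;>
    simp only [vertexLabel_zero, vertexLabel_succ, centerLabel] at h
  · obtain rfl : i = i' := Fin.ext (by split_ifs at h <;> omega)
    rfl
  · split_ifs at h <;> omega
  · split_ifs at h <;> omega
  · have hj := j.isLt.trans_eq (leafCount_mirror hi).symm
    have hj' := j'.isLt.trans_eq (leafCount_mirror hi').symm
    obtain ⟨hm, hjj⟩ := edgeRank_inj (mirror_lt hi) (mirror_lt hi') hj hj' (by omega)
    obtain rfl : i = i' := Fin.ext (mirror_inj hi hi' hm)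
    obtain rfl : j = j' := Fin.ext hjj
    rfl

lemma edgeSum_constellationEdge (x : Σ i : Fin (2 * q + 1), Fin (leafCount q A B i)) :
    edgeSum (vertexLabel q A B) (constellationEdge _ _ x) =
      3 * q + 3 + edgeRank q B x.1 x.2 := by
  simp [constellationEdge, centerLabel_add_edgeRank_mirror x.1.isLt]

end TwoSizeConstellation

open TwoSizeConstellation in
theorem superEdgeMagic_twoSizeConstellation (q A B : ℕ) :
    SuperEdgeMagic (constellationGraph (2 * q + 1) fun i => leafCount q A B i) := by
  have hE : (constellationGraph (2 * q + 1) fun i => leafCount q A B i).edgeSet.ncard =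
      (q + 1) * A + q * B := by
    rw [ncard_edgeSet_constellationGraph, sum_leafCount]
  refine SimpleGraph.superEdgeMagic_of_edgeSum _ vertexLabel_injective
    (fun v => card_vertex ▸ vertexLabel_mem v) (s := 3 * q + 3) ?_ ?_
  · rw [edgeSet_constellationGraph]
    rintro _ ⟨x, rfl⟩ _ ⟨y, rfl⟩ h
    rw [edgeSum_constellationEdge, edgeSum_constellationEdge] at h
    obtain ⟨hi, hj⟩ := edgeRank_inj x.1.isLt y.1.isLt x.2.isLt y.2.isLt (by omega)
    rw [Sigma.ext_fin hi hj]
  · rw [hE, edgeSet_constellationGraph]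
    rintro _ ⟨x, rfl⟩
    have := edgeRank_lt x.1.isLt x.2.isLt
    rw [edgeSum_constellationEdge, mem_Ico]
    omega

theorem super_edge_magic_two_star_sizes_general (a b q : ℕ) :
    SuperEdgeMagic (constellationGraph (2 * q + 1)
      (fun i => if i.val ≤ q then a - 1 else b - 1)) :=
  superEdgeMagic_twoSizeConstellation q (a - 1) (b - 1)

/-- For all integers `a, b ≥ 1` and `q ≥ 0`, the forest consisting of
`q+1` pairwise disjoint stars with `a` vertices each (i.e. with `a − 1` edges) together
with `q` pairwise disjoint stars with `b` vertices each admits a super edge-magic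
labeling. -/
theorem super_edge_magic_two_star_sizes (a b q : ℕ) (ha : 1 ≤ a) (hb : 1 ≤ b) :
    SuperEdgeMagic (constellationGraph (2 * q + 1)
      (fun i => if i.val ≤ q then a - 1 else b - 1)) :=
  super_edge_magic_two_star_sizes_general a b q
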